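/- arXiv:1808.10774 — 3 statements merged into one kernel-verified Lean document; each statement's English description precedes it below -/
import Mathlib

section
/- For every real number l ≥ 1, the improper integral ∫₁^∞ frac(t/l) / t² dt equals (1 - γ)/l + (ln l)/l, where frac denotes the fractional part and γ is the Euler–Mascheroni constant. -/
/-!
Substituting `u = t / l` turns the integral into `l⁻¹ ∫_{1/l}^∞ frac u / u² du`. On `(1/l, 1)` the
fractional part is `u` itself, contributing `log l`. On `(1, ∞)` the integral over `[n, n + 1]` is
Mathlib's `ZetaAsymptotics.term n 1`, and these terms sum to `1 - γ`.
-/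

open MeasureTheory Real Set Filter

lemma integrableOn_fract_div_sq_Ioi {c : ℝ} (hc : 0 < c) :
    IntegrableOn (fun t : ℝ => Int.fract t / t ^ 2) (Ioi c) := by
  refine (integrableOn_Ioi_rpow_of_lt (by norm_num : (-2 : ℝ) < -1) hc).mono'
    (measurable_fract.div (measurable_id.pow_const 2)).aestronglyMeasurable
    ((ae_restrict_iff' measurableSet_Ioi).mpr (.of_forall fun t ht => ?_))
  rw [norm_of_nonneg (by have := Int.fract_nonneg t; positivity), rpow_neg (hc.trans ht).le,
    rpow_two, ← one_div]
  exact div_le_div_of_nonneg_right (Int.fract_lt_one t).le (sq_nonneg t)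

lemma ZetaAsymptotics.term_eq_intervalIntegral_fract (n : ℕ) (s : ℝ) :
    term n s = ∫ x in n..n + 1, Int.fract x / x ^ (s + 1) := by
  refine intervalIntegral.integral_congr_Ioo_of_le (by linarith) fun x hx => ?_
  rw [Int.fract, Int.floor_eq_iff.mpr ⟨by exact_mod_cast hx.1.le, by exact_mod_cast hx.2⟩,
    Int.cast_natCast]

lemma intervalIntegral_fract_div_sq_eq_termSum (N : ℕ) :
    ∫ t in (1 : ℝ)..N + 1, Int.fract t / t ^ 2 = ZetaAsymptotics.termSum 1 N := by
  have hint (k : ℕ) :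
      IntervalIntegrable (fun t : ℝ => Int.fract t / t ^ 2) volume (k + 1) (k + 1 + 1) := by
    refine ((integrableOn_fract_div_sq_Ioi one_half_pos).mono_set ?_).intervalIntegrable
    rw [uIcc_of_le (by linarith)]
    exact Icc_subset_Ioi_iff (by linarith) |>.mpr (by linarith [k.cast_nonneg (α := ℝ)])
  have hsum := intervalIntegral.sum_integral_adjacent_intervals (a := fun k : ℕ => (k : ℝ) + 1)
    (μ := volume) (n := N) fun k _ => by simpa using hint k
  simp only [Nat.cast_zero, zero_add] at hsum
  rw [← hsum, ZetaAsymptotics.termSum]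
  refine Finset.sum_congr rfl fun k _ => ?_
  simp [ZetaAsymptotics.term_eq_intervalIntegral_fract, one_add_one_eq_two]

lemma integral_Ioi_one_fract_div_sq :
    ∫ t in Ioi (1 : ℝ), Int.fract t / t ^ 2 = 1 - eulerMascheroniConstant := by
  refine tendsto_nhds_unique (intervalIntegral_tendsto_integral_Ioi 1
    (integrableOn_fract_div_sq_Ioi one_pos)
    (tendsto_atTop_add_const_right _ 1 tendsto_natCast_atTop_atTop)) ?_
  simp_rw [intervalIntegral_fract_div_sq_eq_termSum]
  exact ZetaAsymptotics.term_tsum_one.tendsto_sum_nat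

lemma integral_Ioc_fract_div_sq {c : ℝ} (hc : 0 < c) (hc1 : c ≤ 1) :
    ∫ t in Ioc c 1, Int.fract t / t ^ 2 = -log c := by
  rw [← intervalIntegral.integral_of_le hc1]
  calc ∫ t in c..1, Int.fract t / t ^ 2 = ∫ t in c..1, t⁻¹ :=
        intervalIntegral.integral_congr_Ioo_of_le hc1 fun t ht => by
          have ht0 : 0 < t := hc.trans ht.1
          rw [Int.fract_eq_self.mpr ⟨ht0.le, ht.2⟩, sq, div_mul_cancel_left₀ ht0.ne']
    _ = -log c := by rw [integral_inv_of_pos hc one_pos, one_div, log_inv]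

lemma integral_Ioi_fract_div_sq {c : ℝ} (hc : 0 < c) (hc1 : c ≤ 1) :
    ∫ t in Ioi c, Int.fract t / t ^ 2 = 1 - eulerMascheroniConstant - log c := by
  rw [← Ioc_union_Ioi_eq_Ioi hc1, setIntegral_union (Ioc_disjoint_Ioi le_rfl) measurableSet_Ioi
    ((integrableOn_fract_div_sq_Ioi hc).mono_set Ioc_subset_Ioi_self)
    (integrableOn_fract_div_sq_Ioi one_pos), integral_Ioc_fract_div_sq hc hc1,
    integral_Ioi_one_fract_div_sq]
  ring

lemma integral_Ioi_comp_div_div_sq (g : ℝ → ℝ) (a : ℝ) {l : ℝ} (hl : 0 < l) :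
    ∫ t in Ioi a, g (t / l) / t ^ 2 = l⁻¹ * ∫ u in Ioi (a / l), g u / u ^ 2 := by
  have hscale (t : ℝ) : g (t / l) / t ^ 2 = (l ^ 2)⁻¹ * (g (l⁻¹ * t) / (l⁻¹ * t) ^ 2) := by
    rw [inv_mul_eq_div]
    field_simp
  simp_rw [hscale]
  rw [integral_const_mul, integral_comp_mul_left_Ioi (fun u => g u / u ^ 2) a (inv_pos.mpr hl),
    smul_eq_mul, inv_inv, inv_mul_eq_div l a]
  field_simp

theorem stmt_0 (l : ℝ) (hl : 1 ≤ l) :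
    ∫ t in Set.Ioi (1 : ℝ), Int.fract (t / l) / t ^ 2 =
      (1 - Real.eulerMascheroniConstant) / l + Real.log l / l := by
  have hl0 : 0 < l := one_pos.trans_le hl
  rw [integral_Ioi_comp_div_div_sq _ _ hl0, integral_Ioi_fract_div_sq (by positivity)
    (div_le_one_of_le₀ hl hl0.le), one_div, log_inv]
  ring
end

section
/- For any real l ≥ 1 and any natural number n ≥ 1, ∫₁^{nl} frac(t/l)/t² dt = (ln(nl))/l − (1/l)·∑_{k=2}^n 1/k. -/
/-!
On `[k l, (k + 1) l]` the integrand is `(t / l - k) / t ^ 2`, the derivative of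
`log t / l + k / t`. Splitting `(1, n l)` at the multiples of `l` telescopes the logarithms, and
the boundary terms `k / ((k + 1) l) - k / (k l) = -1 / ((k + 1) l)` produce the harmonic sum.
-/

open MeasureTheory Real

lemma Int.fract_div_eq_sub_of_mem_Ico {l t : ℝ} (hl : 0 < l) {k : ℤ}
    (ht : t ∈ Set.Ico (k * l) ((k + 1) * l)) : Int.fract (t / l) = t / l - k := by
  have hfloor : ⌊t / l⌋ = k :=
    Int.floor_eq_iff.mpr ⟨(le_div_iff₀ hl).mpr ht.1, (div_lt_iff₀ hl).mpr ht.2⟩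
  rw [Int.fract, hfloor]

lemma intervalIntegrable_fract_div_sq (l : ℝ) {a b : ℝ} (ha : 0 < a) (hb : 0 < b) :
    IntervalIntegrable (fun t => Int.fract (t / l) / t ^ 2) volume a b := by
  have hpos : ∀ t ∈ Set.uIcc a b, 0 < t := fun t ht => (lt_min ha hb).trans_le ht.1
  have hinv : IntervalIntegrable (fun t : ℝ => 1 / t ^ 2) volume a b :=
    ContinuousOn.intervalIntegrable <| continuousOn_const.div (by fun_prop)
      fun t ht => (pow_pos (hpos t ht) 2).ne'
  have hmeas : Measurable fun t => Int.fract (t / l) / t ^ 2 :=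
    (measurable_fract.comp (measurable_id.div_const l)).div (measurable_id.pow_const 2)
  refine hinv.mono_fun hmeas.aestronglyMeasurable (Filter.Eventually.of_forall fun t => ?_)
  simp only [norm_div, norm_pow, Real.norm_eq_abs, abs_one,
    abs_of_nonneg (Int.fract_nonneg (t / l))]
  gcongr
  exact (Int.fract_lt_one _).le

lemma integral_fract_div_sq_of_le {l a b : ℝ} (hl : 0 < l) (k : ℕ) (ha : 0 < a)
    (hka : k * l ≤ a) (hab : a ≤ b) (hb : b ≤ (k + 1) * l) :
    ∫ t in a..b, Int.fract (t / l) / t ^ 2 = (log b - log a) / l + (k / b - k / a) := by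
  have hpos : ∀ t ∈ Set.Icc a b, 0 < t := fun t ht => ha.trans_le ht.1
  have hderiv : ∀ t ∈ Set.Ioo a b,
      HasDerivAt (fun t => log t / l + k / t) (Int.fract (t / l) / t ^ 2) t := by
    intro t ht
    have ht0 := (hpos t (Set.Ioo_subset_Icc_self ht)).ne'
    have hfract : Int.fract (t / l) = t / l - k :=
      Int.fract_div_eq_sub_of_mem_Ico hl (k := k) <| by
        push_cast
        exact ⟨hka.trans ht.1.le, ht.2.trans_le hb⟩
    refine ((hasDerivAt_log ht0).div_const l).add
      ((hasDerivAt_const t (k : ℝ)).div (hasDerivAt_id' t) ht0) |>.congr_deriv ?_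
    rw [hfract]
    field_simp
    ring
  have hcont : ContinuousOn (fun t => log t / l + k / t) (Set.Icc a b) := by
    refine ContinuousOn.add ?_ ?_
    · exact (continuousOn_log.mono fun t ht => (hpos t ht).ne').div_const l
    · exact continuousOn_const.div continuousOn_id fun t ht => (hpos t ht).ne'
  rw [intervalIntegral.integral_eq_sub_of_hasDerivAt_of_le hab hcont hderiv
    (intervalIntegrable_fract_div_sq l ha (ha.trans_le hab))]
  ring

lemma integral_fract_div_sq_one_to_nat_mul {l : ℝ} (hl : 1 ≤ l) {n : ℕ} (hn : 1 ≤ n) :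
    ∫ t in (1 : ℝ)..n * l, Int.fract (t / l) / t ^ 2 =
      log (n * l) / l - (1 / l) * ∑ k ∈ Finset.Icc 2 n, (1 : ℝ) / k := by
  have hl0 : 0 < l := one_pos.trans_le hl
  induction n, hn using Nat.le_induction with
  | base =>
    rw [integral_fract_div_sq_of_le hl0 0 one_pos (by simp) (by simpa using hl) (by simp)]
    simp
  | succ n hn ih =>
    have hn1 : (1 : ℝ) ≤ n := by exact_mod_cast hn
    have hnl : 0 < (n : ℝ) * l := by positivity
    push_cast
    rw [← intervalIntegral.integral_add_adjacent_intervals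
      (intervalIntegrable_fract_div_sq l one_pos hnl)
      (intervalIntegrable_fract_div_sq l hnl (by positivity)), ih,
      integral_fract_div_sq_of_le hl0 n hnl le_rfl (by nlinarith) le_rfl,
      Finset.sum_Icc_succ_top (by omega)]
    push_cast
    field_simp
    ring

theorem stmt_4 (l : ℝ) (hl : 1 ≤ l) (n : ℕ) (hn : 1 ≤ n) :
    ∫ t in Set.Ioo (1 : ℝ) (n * l), Int.fract (t / l) / t ^ 2 =
      Real.log (n * l) / l - (1 / l) * ∑ k ∈ Finset.Icc 2 n, (1 : ℝ) / k := by
  have hnl : (1 : ℝ) ≤ n * l := one_le_mul_of_one_le_of_one_le (by exact_mod_cast hn) hl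
  rw [← integral_Ioc_eq_integral_Ioo, ← intervalIntegral.integral_of_le hnl]
  exact integral_fract_div_sq_one_to_nat_mul hl hn
end

section
/- Let h₁,…,h_N be real numbers and l₁,…,l_N ∈ [1,∞) with ∑_{k=1}^N h_k/l_k = 0. Then for φ(t) := ∑_{k=1}^N h_k · frac(t/l_k), the improper integral ∫₁^∞ φ(t)/t² dt equals ∑_{k=1}^N (h_k/l_k)·ln l_k. -/
open MeasureTheory Real Set

noncomputable def FF : ℝ → ℝ := fun u => Int.fract u / u ^ 2

lemma FF_integrable {a : ℝ} (ha : 0 < a) : IntegrableOn FF (Set.Ioi a) := by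
  have hb : IntegrableOn (fun u : ℝ => u ^ (-2 : ℝ)) (Set.Ioi a) :=
    integrableOn_Ioi_rpow_of_lt (by norm_num) ha
  apply hb.mono'
  · exact (measurable_fract.div (measurable_id.pow_const 2)).aestronglyMeasurable
  · filter_upwards [ae_restrict_mem measurableSet_Ioi] with u hu
    have hu0 : 0 < u := ha.trans hu
    have h1 : u ^ (-2 : ℝ) = (u ^ 2)⁻¹ := by
      rw [rpow_neg hu0.le]
      norm_num [Real.rpow_natCast]
    rw [h1, FF, Real.norm_eq_abs, abs_div, abs_of_nonneg (Int.fract_nonneg u),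
      abs_of_nonneg (by positivity : (0:ℝ) ≤ u ^ 2), div_eq_mul_inv]
    have := Int.fract_lt_one u
    nlinarith [Int.fract_nonneg u, inv_pos.mpr (by positivity : (0:ℝ) < u ^ 2)]

lemma FF_int_val {a : ℝ} (ha : 0 < a) (ha1 : a ≤ 1) :
    ∫ u in Set.Ioi a, FF u = -Real.log a + ∫ u in Set.Ioi 1, FF u := by
  have hsplit : Set.Ioi a = Set.Ioc a 1 ∪ Set.Ioi 1 := (Set.Ioc_union_Ioi_eq_Ioi ha1).symm
  rw [hsplit, setIntegral_union (Set.Ioc_disjoint_Ioi le_rfl) measurableSet_Ioi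
    ((FF_integrable ha).mono_set (by rw [hsplit]; exact Set.subset_union_left))
    (FF_integrable one_pos)]
  congr 1
  rw [integral_Ioc_eq_integral_Ioo]
  have : ∫ u in Set.Ioo a 1, FF u = ∫ u in Set.Ioo a 1, u⁻¹ := by
    apply setIntegral_congr_fun measurableSet_Ioo
    intro u hu
    have hu0 : 0 < u := ha.trans hu.1
    rw [FF, Int.fract_eq_self.mpr ⟨hu0.le, hu.2⟩, pow_two, div_mul_eq_div_div, div_self hu0.ne']
    exact one_div u
  rw [this, ← integral_Ioc_eq_integral_Ioo, ← intervalIntegral.integral_of_le ha1,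
    integral_inv_of_pos ha one_pos, Real.log_div one_ne_zero ha.ne', Real.log_one]
  ring

theorem stmt_5 (N : ℕ) (h : Fin N → ℝ) (l : Fin N → ℝ) (hl : ∀ k, 1 ≤ l k)
    (hsum : ∑ k, h k / l k = 0) :
    ∫ t in Set.Ioi (1 : ℝ), (∑ k, h k * Int.fract (t / l k)) / t ^ 2 =
      ∑ k, (h k / l k) * Real.log (l k) := by
  set C : ℝ := ∫ u in Set.Ioi (1:ℝ), FF u with hC
  have hlpos : ∀ k, 0 < l k := fun k => lt_of_lt_of_le one_pos (hl k)
  have key : ∀ k : Fin N,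
      IntegrableOn (fun t => h k * Int.fract (t / l k) / t ^ 2) (Set.Ioi (1:ℝ)) ∧
      ∫ t in Set.Ioi (1:ℝ), h k * Int.fract (t / l k) / t ^ 2
        = h k / l k * Real.log (l k) + h k / l k * C := by
    intro k
    have hinv : (0:ℝ) < (l k)⁻¹ := inv_pos.mpr (hlpos k)
    have hcongr : Set.EqOn (fun t => h k * Int.fract (t / l k) / t ^ 2)
        (fun t => (h k / (l k) ^ 2) * FF (t * (l k)⁻¹)) (Set.Ioi (1:ℝ)) := by
      intro t ht
      have ht0 : (0:ℝ) < t := lt_trans one_pos ht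
      have e : FF (t * (l k)⁻¹) = Int.fract (t / l k) * (l k) ^ 2 / t ^ 2 := by
        simp only [FF, ← div_eq_mul_inv]
        rw [div_pow, div_div_eq_mul_div]
      simp only [e]
      field_simp [ht0.ne', (hlpos k).ne']
    have hint : IntegrableOn (fun t => (h k / (l k) ^ 2) * FF (t * (l k)⁻¹)) (Set.Ioi (1:ℝ)) := by
      apply Integrable.const_mul
      have := (FF_integrable (a := (l k)⁻¹) hinv)
      have h2 : IntegrableOn (fun t : ℝ => FF (t * (l k)⁻¹)) (Set.Ioi (1:ℝ)) := by
        rw [MeasureTheory.integrableOn_Ioi_comp_mul_right_iff FF 1 hinv]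
        simpa using this
      exact h2
    constructor
    · exact (hint.congr_fun (fun t ht => (hcongr ht).symm) measurableSet_Ioi)
    · rw [setIntegral_congr_fun measurableSet_Ioi hcongr, integral_const_mul,
        MeasureTheory.integral_comp_mul_right_Ioi FF 1 hinv, one_mul,
        FF_int_val hinv (inv_le_one_of_one_le₀ (hl k)), smul_eq_mul,
        Real.log_inv]
      have : ((l k)⁻¹)⁻¹ = l k := inv_inv _
      rw [this]
      field_simp [(hlpos k).ne']
      ring
  have hrw : Set.EqOn (fun t => (∑ k, h k * Int.fract (t / l k)) / t ^ 2)
      (fun t => ∑ k, h k * Int.fract (t / l k) / t ^ 2) (Set.Ioi (1:ℝ)) := by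
    intro t ht
    simp [Finset.sum_div]
  rw [setIntegral_congr_fun measurableSet_Ioi hrw,
    integral_finset_sum _ (fun k _ => (key k).1)]
  have : ∑ k, (h k / l k * Real.log (l k) + h k / l k * C)
      = ∑ k, (h k / l k) * Real.log (l k) + (∑ k, h k / l k) * C := by
    rw [Finset.sum_add_distrib, Finset.sum_mul]
  simp only [fun k => (key k).2]
  rw [this, hsum, zero_mul, add_zero]
end
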